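/- (Proposition 1, trace-commutation.) Let G = (V, E) be a finite simple graph, n ∈ ℕ, and σ : V → Fin n × Fin 3 an injective assignment of vertices to (qubit, slot) pairs such that adjacent vertices are assigned distinct qubits, i.e. G.Adj u v implies (σ u).1 ≠ (σ v).1. Then for every m : V → {−1,1}, the relaxed Hamiltonian H = Σ_{{u,v} ∈ E} (1/2)·(Id − 3·P_u·P_v) satisfies tr(H · F(m)) = cut(m) = Σ_{{u,v} ∈ E} (1/2)·(1 − m(u)·m(v)). -/

import Mathlib

open Matrix
open scoped Classical

/-- The Pauli `X` matrix. -/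
noncomputable def PX : Matrix (Fin 2) (Fin 2) ℂ := !![0, 1; 1, 0]

/-- The Pauli `Y` matrix. -/
noncomputable def PY : Matrix (Fin 2) (Fin 2) ℂ := !![0, -Complex.I; Complex.I, 0]

/-- The Pauli `Z` matrix. -/
noncomputable def PZ : Matrix (Fin 2) (Fin 2) ℂ := !![1, 0; 0, -1]

/-- The three non-identity Pauli matrices `q₁ = X, q₂ = Y, q₃ = Z` (slots indexed by `Fin 3`). -/
noncomputable def pauliXYZ : Fin 3 → Matrix (Fin 2) (Fin 2) ℂ := ![PX, PY, PZ]

/-- The `(3,1)`-QRAC encoding of three `±1`-valued bits into one qubit. -/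
noncomputable def qrac3 (m : Fin 3 → ℝ) : Matrix (Fin 2) (Fin 2) ℂ :=
  (1 / 2 : ℂ) • ((1 : Matrix (Fin 2) (Fin 2) ℂ) +
    (1 / (Real.sqrt 3 : ℂ)) • ((m 0 : ℂ) • PX + (m 1 : ℂ) • PY + (m 2 : ℂ) • PZ))

/-- The vertex operator `P_v`: the weight-1 Pauli string acting as the Pauli matrix of slot
`(σ v).2` on qubit `(σ v).1` and as the identity on all other qubits. -/
noncomputable def vertexOp {V : Type*} (n : ℕ) (σ : V → Fin n × Fin 3) (v : V) :
    Matrix (Fin n → Fin 2) (Fin n → Fin 2) ℂ :=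
  Matrix.of fun x y =>
    pauliXYZ (σ v).2 (x (σ v).1) (y (σ v).1) *
      ∏ q ∈ Finset.univ.erase (σ v).1, (if x q = y q then (1 : ℂ) else 0)

/-- The three bits assigned to qubit `q`: `g_m(q)_j = m v` if `σ v = (q, j)` for the (necessarily
unique, by injectivity of `σ`) vertex `v`, and `1` if no vertex is assigned to `(q, j)`. -/
noncomputable def gfun {V : Type*} (n : ℕ) (σ : V → Fin n × Fin 3) (m : V → ℝ)
    (q : Fin n) (j : Fin 3) : ℝ :=
  if h : ∃ v, σ v = (q, j) then m h.choose else 1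

/-- The embedding `F(m)`: the product state with entries
`F(m)(x,y) = ∏_q f(g_m(q))(x_q, y_q)`. -/
noncomputable def embed {V : Type*} (n : ℕ) (σ : V → Fin n × Fin 3) (m : V → ℝ) :
    Matrix (Fin n → Fin 2) (Fin n → Fin 2) ℂ :=
  Matrix.of fun x y => ∏ q, qrac3 (gfun n σ m q) (x q) (y q)

/-- The relaxed Hamiltonian `H = Σ_{{u,v} ∈ E} (1/2)·(Id − 3·P_u·P_v)`. -/
noncomputable def relaxH {V : Type*} [Fintype V] [DecidableEq V] (n : ℕ)
    (σ : V → Fin n × Fin 3) (G : SimpleGraph V) [DecidableRel G.Adj] :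
    Matrix (Fin n → Fin 2) (Fin n → Fin 2) ℂ :=
  ∑ e ∈ G.edgeFinset, (1 / 2 : ℂ) •
    ((1 : Matrix (Fin n → Fin 2) (Fin n → Fin 2) ℂ) -
      (3 : ℂ) • (vertexOp n σ e.out.1 * vertexOp n σ e.out.2))

/-- The cut value `cut(m) = Σ_{{u,v} ∈ E} (1/2)·(1 − m(u)·m(v))`. -/
noncomputable def cutVal {V : Type*} [Fintype V] [DecidableEq V]
    (G : SimpleGraph V) [DecidableRel G.Adj] (m : V → ℝ) : ℝ :=
  ∑ e ∈ G.edgeFinset, (1 / 2 : ℝ) * (1 - m e.out.1 * m e.out.2)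

/-!
All operators involved are Kronecker products of single-qubit matrices, so their traces factor
over the qubits. Each QRAC state has unit trace and `tr (q_j f(g)) = g_j / √3`. Since adjacent
vertices sit on distinct qubits, `tr (P_u P_v F(m))` is the product of two such local factors,
`m u * m v / 3`, and each edge term of `H` contributes `(1 - m u * m v) / 2`.
-/

namespace Matrix

variable {ι m R : Type*} [Fintype ι] [DecidableEq ι] [Fintype m] [CommRing R]

def piKron (A : ι → Matrix m m R) : Matrix (ι → m) (ι → m) R :=
  of fun x y => ∏ i, A i (x i) (y i)

theorem piKron_mul_piKron (A B : ι → Matrix m m R) :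
    piKron A * piKron B = piKron (A * B) := by
  ext x y
  simp only [piKron, mul_apply, of_apply, Pi.mul_apply, ← Finset.prod_mul_distrib,
    Finset.prod_univ_sum, Fintype.piFinset_univ]

theorem trace_piKron (A : ι → Matrix m m R) : (piKron A).trace = ∏ i, (A i).trace := by
  simp only [trace, diag, piKron, of_apply, Finset.prod_univ_sum, Fintype.piFinset_univ]

theorem prod_trace_mulSingle_mul_mulSingle_mul [DecidableEq m] (ρ : ι → Matrix m m R)
    (hρ : ∀ i, (ρ i).trace = 1) {a b : ι} (hab : a ≠ b) (P Q : Matrix m m R) :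
    ∏ i, ((Pi.mulSingle a P * Pi.mulSingle b Q * ρ : ι → Matrix m m R) i).trace =
      (P * ρ a).trace * (Q * ρ b).trace := by
  have hsite : ∀ i, ((Pi.mulSingle a P * Pi.mulSingle b Q * ρ : ι → Matrix m m R) i).trace =
      (Pi.mulSingle a (P * ρ a).trace : ι → R) i *
        (Pi.mulSingle b (Q * ρ b).trace : ι → R) i := by
    intro i
    by_cases hia : i = a
    · subst hia
      simp [Pi.mulSingle_eq_of_ne hab]
    · by_cases hib : i = b
      · subst hib
        simp [Pi.mulSingle_eq_of_ne hia]
      · simp [Pi.mulSingle_eq_of_ne hia, Pi.mulSingle_eq_of_ne hib, hρ]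
  simp only [hsite, Finset.prod_mul_distrib, Fintype.prod_pi_mulSingle']

end Matrix

theorem SimpleGraph.adj_out_of_mem_edgeSet {V : Type*} {G : SimpleGraph V} {e : Sym2 V}
    (he : e ∈ G.edgeSet) : G.Adj e.out.1 e.out.2 := by
  rwa [← SimpleGraph.mem_edgeSet, Sym2.mk, Prod.mk.eta, Quot.out_eq]

theorem trace_qrac3 (g : Fin 3 → ℝ) : (qrac3 g).trace = 1 := by
  simp [qrac3, trace, Fin.sum_univ_two, PX, PY, PZ]
  ring

theorem trace_pauliXYZ_mul_qrac3 (j : Fin 3) (g : Fin 3 → ℝ) :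
    (pauliXYZ j * qrac3 g).trace = g j / Real.sqrt 3 := by
  fin_cases j <;> simp [pauliXYZ, qrac3, trace, diag, mul_apply, Fin.sum_univ_two, PX, PY, PZ]
  · ring
  · linear_combination -(g 1 : ℂ) / Real.sqrt 3 * Complex.I_sq
  · ring

section Embedding

variable {V : Type*} {n : ℕ} {σ : V → Fin n × Fin 3}

theorem vertexOp_eq_piKron (v : V) :
    vertexOp n σ v = piKron (Pi.mulSingle (σ v).1 (pauliXYZ (σ v).2)) := by
  ext x y
  rw [vertexOp, piKron, of_apply, of_apply,
    ← Finset.mul_prod_erase Finset.univ _ (Finset.mem_univ (σ v).1), Pi.mulSingle_eq_same]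
  congr 1
  refine Finset.prod_congr rfl fun q hq => ?_
  rw [Pi.mulSingle_eq_of_ne (Finset.ne_of_mem_erase hq), one_apply]

theorem embed_eq_piKron (m : V → ℝ) :
    embed n σ m = piKron fun q => qrac3 (gfun n σ m q) := rfl

theorem gfun_apply_self (hσ : Function.Injective σ) (m : V → ℝ) (v : V) :
    gfun n σ m (σ v).1 (σ v).2 = m v := by
  have h : ∃ w, σ w = ((σ v).1, (σ v).2) := ⟨v, rfl⟩
  rw [gfun, dif_pos h, hσ h.choose_spec]

theorem trace_embed (m : V → ℝ) : (embed n σ m).trace = 1 := by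
  simp [embed_eq_piKron, trace_piKron, trace_qrac3]

theorem trace_vertexOp_mul_vertexOp_mul_embed (hσ : Function.Injective σ) (m : V → ℝ)
    {u v : V} (huv : (σ u).1 ≠ (σ v).1) :
    (vertexOp n σ u * vertexOp n σ v * embed n σ m).trace = m u * m v / 3 := by
  have hsqrt3 : (Real.sqrt 3 : ℂ) * Real.sqrt 3 = 3 := by
    rw [← Complex.ofReal_mul, Real.mul_self_sqrt (by norm_num)]
    norm_num
  rw [vertexOp_eq_piKron, vertexOp_eq_piKron, embed_eq_piKron, piKron_mul_piKron,
    piKron_mul_piKron, trace_piKron,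
    prod_trace_mulSingle_mul_mulSingle_mul _ (fun q => trace_qrac3 _) huv,
    trace_pauliXYZ_mul_qrac3, trace_pauliXYZ_mul_qrac3, gfun_apply_self hσ, gfun_apply_self hσ,
    div_mul_div_comm, hsqrt3]

end Embedding

theorem relaxed_hamiltonian_commutes_with_cut_general
    {V : Type*} [Fintype V] [DecidableEq V] (n : ℕ)
    (G : SimpleGraph V) [DecidableRel G.Adj]
    (σ : V → Fin n × Fin 3) (hσ : Function.Injective σ)
    (hadj : ∀ u v : V, G.Adj u v → (σ u).1 ≠ (σ v).1)
    (m : V → ℝ) :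
    (relaxH n σ G * embed n σ m).trace = (cutVal G m : ℂ) := by
  rw [relaxH, cutVal, Finset.sum_mul, trace_sum, Complex.ofReal_sum]
  refine Finset.sum_congr rfl fun e he => ?_
  have hne := hadj _ _ (SimpleGraph.adj_out_of_mem_edgeSet (G.mem_edgeFinset.mp he))
  rw [smul_mul_assoc, trace_smul, sub_mul, one_mul, smul_mul_assoc, trace_sub, trace_smul,
    trace_embed, trace_vertexOp_mul_vertexOp_mul_embed hσ m hne, smul_eq_mul, smul_eq_mul]
  push_cast
  ring

theorem relaxed_hamiltonian_commutes_with_cut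
    {V : Type*} [Fintype V] [DecidableEq V] (n : ℕ)
    (G : SimpleGraph V) [DecidableRel G.Adj]
    (σ : V → Fin n × Fin 3) (hσ : Function.Injective σ)
    (hadj : ∀ u v : V, G.Adj u v → (σ u).1 ≠ (σ v).1)
    (m : V → ℝ) (hm : ∀ v, m v = 1 ∨ m v = -1) :
    (relaxH n σ G * embed n σ m).trace = (cutVal G m : ℂ) :=
  relaxed_hamiltonian_commutes_with_cut_general n G σ hσ hadj m
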